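/- arXiv:0709.4046 — 3 statements merged into one kernel-verified Lean document; each statement's English description precedes it below -/
import Mathlib

section
/- (Equivalence theorem, nonlinear case.) Let V and W be real normed spaces, T : V → W a bounded linear operator, and (T_n) a sequence of (not necessarily linear or continuous) maps from V to W that is consistent with T. Then (T_n) converges to T if and only if (T_n) is stable at every point of V. -/
/-! Both directions are ε/3 arguments through the continuous limit `T`. If `Tₙ → T` pointwise,
then `Tₙ v` and `Tₙ v₀` are eventually close to `T v` and `T v₀`, which are close by continuity.
Conversely, given `v`, pick `v'` in the dense subspace close enough to `v` that stability at `v`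
and continuity of `T` apply; then `Tₙ v ≈ Tₙ v' ≈ T v' ≈ T v` for large `n`. -/

open Filter Topology

def StableAt {ι X Y : Type*} [TopologicalSpace X] [PseudoMetricSpace Y]
    (l : Filter ι) (F : ι → X → Y) (x₀ : X) : Prop :=
  ∀ ε > 0, ∀ᶠ x in 𝓝 x₀, ∀ᶠ i in l, dist (F i x) (F i x₀) ≤ ε

section

variable {ι X Y : Type*} [TopologicalSpace X] [PseudoMetricSpace Y]
  {l : Filter ι} {F : ι → X → Y} {f : X → Y}

theorem stableAt_of_tendsto {x₀ : X} (hf : ContinuousAt f x₀)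
    (hF : ∀ x, Tendsto (fun i => F i x) l (𝓝 (f x))) : StableAt l F x₀ := by
  intro ε hε
  have hε3 : 0 < ε / 3 := by positivity
  filter_upwards [Metric.tendsto_nhds.mp hf _ hε3] with x hfx
  filter_upwards [Metric.tendsto_nhds.mp (hF x) _ hε3, Metric.tendsto_nhds.mp (hF x₀) _ hε3]
    with i hx hx₀
  calc dist (F i x) (F i x₀) ≤ dist (F i x) (f x) + dist (f x) (f x₀) + dist (f x₀) (F i x₀) :=
        dist_triangle4 _ _ _ _
    _ ≤ ε := by rw [dist_comm (f x₀)]; linarith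

theorem tendsto_of_stableAt_of_dense {S : Set X} (hS : Dense S) {x : X} (hf : ContinuousAt f x)
    (hstab : StableAt l F x) (hFS : ∀ y ∈ S, Tendsto (fun i => F i y) l (𝓝 (f y))) :
    Tendsto (fun i => F i x) l (𝓝 (f x)) := by
  refine Metric.tendsto_nhds.mpr fun ε hε => ?_
  have hε3 : 0 < ε / 3 := by positivity
  obtain ⟨y, hyS, hFy, hfy⟩ : ∃ y ∈ S, (∀ᶠ i in l, dist (F i y) (F i x) ≤ ε / 3) ∧
      dist (f y) (f x) < ε / 3 :=
    ((mem_closure_iff_frequently.mp (hS x)).and_eventually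
      ((hstab _ hε3).and (Metric.tendsto_nhds.mp hf _ hε3))).exists
  filter_upwards [hFy, Metric.tendsto_nhds.mp (hFS y hyS) _ hε3] with i hxy hy
  calc dist (F i x) (f x) ≤ dist (F i x) (F i y) + dist (F i y) (f y) + dist (f y) (f x) :=
        dist_triangle4 _ _ _ _
    _ < ε := by rw [dist_comm]; linarith

end

theorem tendsto_atTop_nhds_iff_norm_sub_le {E : Type*} [SeminormedAddCommGroup E]
    {u : ℕ → E} {a : E} : Tendsto u atTop (𝓝 a) ↔ ∀ ε > 0, ∃ n₀, ∀ n ≥ n₀, ‖u n - a‖ ≤ ε := by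
  simp only [Metric.nhds_basis_closedBall.tendsto_right_iff, eventually_atTop,
    Metric.mem_closedBall, dist_eq_norm]

theorem stableAt_atTop_iff_norm_sub_le {V W : Type*} [SeminormedAddCommGroup V]
    [SeminormedAddCommGroup W] {F : ℕ → V → W} {v₀ : V} :
    StableAt atTop F v₀ ↔ ∀ ε > 0, ∃ δ > 0, ∀ v, ‖v - v₀‖ ≤ δ →
      ∃ n₀, ∀ n ≥ n₀, ‖F n v - F n v₀‖ ≤ ε := by
  simp only [StableAt, Metric.nhds_basis_closedBall.eventually_iff, eventually_atTop,
    Metric.mem_closedBall, dist_eq_norm]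

/-- Equivalence theorem, nonlinear case: a sequence of (not necessarily linear or
continuous) maps Tₙ : V → W consistent with a bounded linear operator T converges to T
if and only if it is stable at every point of V. -/
theorem equivalence_theorem_nonlinear
    {V W : Type*} [NormedAddCommGroup V] [NormedSpace ℝ V]
    [NormedAddCommGroup W] [NormedSpace ℝ W]
    (T : V →L[ℝ] W) (Tn : ℕ → V → W)
    (V₀ : Submodule ℝ V) (hdense : Dense (V₀ : Set V))
    (hcons : ∀ v ∈ V₀, ∀ ε > (0 : ℝ), ∃ n₀ : ℕ, ∀ n ≥ n₀, ‖Tn n v - T v‖ ≤ ε) :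
    (∀ v : V, ∀ ε > (0 : ℝ), ∃ n₀ : ℕ, ∀ n ≥ n₀, ‖Tn n v - T v‖ ≤ ε) ↔
      (∀ v₀ : V, ∀ ε > (0 : ℝ), ∃ δ > (0 : ℝ), ∀ v : V, ‖v - v₀‖ ≤ δ →
        ∃ n₀ : ℕ, ∀ n ≥ n₀, ‖Tn n v - Tn n v₀‖ ≤ ε) := by
  simp only [← tendsto_atTop_nhds_iff_norm_sub_le, ← stableAt_atTop_iff_norm_sub_le] at hcons ⊢
  exact ⟨fun hconv _ => stableAt_of_tendsto T.continuous.continuousAt hconv,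
    fun hstab v => tendsto_of_stableAt_of_dense hdense T.continuous.continuousAt (hstab v) hcons⟩
end

section
/- (Equivalence theorem for quadrature.) Let a < b and for each n ∈ ℕ let a ≤ x₀⁽ⁿ⁾ < x₁⁽ⁿ⁾ < ⋯ < xₙ⁽ⁿ⁾ ≤ b be nodes with real weights w₀⁽ⁿ⁾, …, wₙ⁽ⁿ⁾, defining the quadrature rule Iₙ(f) = Σᵢ₌₀ⁿ wᵢ⁽ⁿ⁾ f(xᵢ⁽ⁿ⁾), and let I(f) = ∫ₐᵇ f(x) dx. Assume the rule is consistent: there is a dense subspace V₀ of C[a,b] such that Iₙ(f) → I(f) for every f ∈ V₀. Then Iₙ(f) → I(f) for every f ∈ C[a,b] if and only if sup_n Σᵢ₌₀ⁿ |wᵢ⁽ⁿ⁾| < ∞. -/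
open Filter Topology

lemma aux_sign_mul (w : ℝ) : w * Real.sign w = |w| := by
  rcases lt_trichotomy w 0 with h | h | h
  · rw [Real.sign_of_neg h, abs_of_neg h]; ring
  · simp [h]
  · rw [Real.sign_of_pos h, abs_of_pos h]; ring

lemma aux_peak {X : Type*} [MetricSpace X] [CompactSpace X] {m : ℕ}
    (p : Fin m → X) (hp : Function.Injective p) (v : Fin m → ℝ) :
    ∃ f : C(X, ℝ), ‖f‖ ≤ 1 ∧ ∀ i, f (p i) = Real.sign (v i) := by
  obtain ⟨δ, hδ0, hδ⟩ : ∃ δ > 0, ∀ i j : Fin m, i ≠ j → 2 * δ ≤ dist (p i) (p j) := by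
    by_cases hS : (Finset.univ.offDiag : Finset (Fin m × Fin m)).Nonempty
    · set S := (Finset.univ.offDiag : Finset (Fin m × Fin m))
      refine ⟨S.inf' hS (fun q => dist (p q.1) (p q.2)) / 2, ?_, ?_⟩
      · have : ∀ q ∈ S, 0 < dist (p q.1) (p q.2) := by
          intro q hq
          have hne : q.1 ≠ q.2 := (Finset.mem_offDiag.mp hq).2.2
          exact dist_pos.mpr (fun h => hne (hp h))
        have := (Finset.lt_inf'_iff hS (f := fun q => dist (p q.1) (p q.2))).mpr this
        linarith [this]
      · intro i j hij
        have hmem : (i, j) ∈ S := Finset.mem_offDiag.mpr ⟨Finset.mem_univ _, Finset.mem_univ _, hij⟩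
        have := Finset.inf'_le (fun q => dist (p q.1) (p q.2)) hmem
        linarith
    · refine ⟨1, one_pos, fun i j hij => ?_⟩
      exact absurd ⟨(i, j), Finset.mem_offDiag.mpr ⟨Finset.mem_univ _, Finset.mem_univ _, hij⟩⟩ hS
  set g : Fin m → C(X, ℝ) := fun i =>
    ⟨fun t => max 0 (1 - dist t (p i) / δ), by fun_prop⟩ with hg
  have hg_nonneg : ∀ i t, 0 ≤ g i t := fun i t => le_max_left _ _
  have hg_le_one : ∀ i t, g i t ≤ 1 := by
    intro i t
    have h1 : 0 ≤ dist t (p i) / δ := div_nonneg dist_nonneg hδ0.le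
    simp only [hg, ContinuousMap.coe_mk]
    apply max_le (by norm_num) (by linarith)
  have hg_self : ∀ i, g i (p i) = 1 := by
    intro i; simp [hg]
  have hg_other : ∀ i t, δ ≤ dist t (p i) → g i t = 0 := by
    intro i t ht
    have : 1 - dist t (p i) / δ ≤ 0 := by
      rw [sub_nonpos, le_div_iff₀ hδ0]; linarith
    simp only [hg, ContinuousMap.coe_mk]
    exact max_eq_left this
  -- at most one index has g i t > 0
  have hsum_le : ∀ t, ∑ i, g i t ≤ 1 := by
    intro t
    by_cases h : ∃ i, dist t (p i) < δ
    · obtain ⟨i₀, hi₀⟩ := h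
      have : ∑ i, g i t = g i₀ t := by
        apply Finset.sum_eq_single
        · intro j _ hj
          apply hg_other
          by_contra hlt
          push_neg at hlt
          have := hδ j i₀ hj
          have := dist_triangle (p j) t (p i₀)
          rw [dist_comm (p j) t] at this
          linarith
        · intro h; exact absurd (Finset.mem_univ i₀) h
      rw [this]; exact hg_le_one i₀ t
    · push_neg at h
      have : ∑ i, g i t = 0 := Finset.sum_eq_zero (fun i _ => hg_other i t (h i))
      rw [this]; norm_num
  refine ⟨∑ i, Real.sign (v i) • g i, ?_, ?_⟩
  · rw [ContinuousMap.norm_le _ zero_le_one]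
    intro t
    simp only [ContinuousMap.coe_sum, ContinuousMap.coe_smul, Finset.sum_apply, Pi.smul_apply,
      smul_eq_mul, Real.norm_eq_abs]
    calc |∑ i, Real.sign (v i) * g i t| ≤ ∑ i, |Real.sign (v i) * g i t| :=
          Finset.abs_sum_le_sum_abs _ _
      _ ≤ ∑ i, g i t := by
          apply Finset.sum_le_sum
          intro i _
          rw [abs_mul, abs_of_nonneg (hg_nonneg i t)]
          have : |Real.sign (v i)| ≤ 1 := by
            rcases Real.sign_apply_eq (v i) with h | h | h <;> simp [h]
          nlinarith [hg_nonneg i t]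
      _ ≤ 1 := hsum_le t
  · intro i
    simp only [ContinuousMap.coe_sum, ContinuousMap.coe_smul, Finset.sum_apply, Pi.smul_apply,
      smul_eq_mul]
    rw [Finset.sum_eq_single i]
    · rw [hg_self i]; ring
    · intro j _ hj
      rw [hg_other j (p i) (by linarith [hδ i j (Ne.symm hj), dist_nonneg (α := X) (x := p i) (y := p j)])]
      ring
    · intro h; exact absurd (Finset.mem_univ i) h

/-- Equivalence theorem for quadrature: a consistent quadrature rule
Iₙ(f) = Σᵢ wᵢ⁽ⁿ⁾ f(xᵢ⁽ⁿ⁾) converges to I(f) = ∫ₐᵇ f for every continuous f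
if and only if it is stable, i.e. supₙ Σᵢ |wᵢ⁽ⁿ⁾| < ∞. -/
theorem equivalence_theorem_quadrature
    {a b : ℝ} (hab : a < b)
    (x : (n : ℕ) → Fin (n + 1) → Set.Icc a b) (hx : ∀ n, StrictMono (x n))
    (w : (n : ℕ) → Fin (n + 1) → ℝ)
    (V₀ : Submodule ℝ C(Set.Icc a b, ℝ)) (hdense : Dense (V₀ : Set C(Set.Icc a b, ℝ)))
    (hcons : ∀ f ∈ V₀,
      Tendsto (fun n => ∑ i, w n i * f (x n i)) atTop
        (𝓝 (∫ t in a..b, f (Set.projIcc a b hab.le t)))) :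
    (∀ f : C(Set.Icc a b, ℝ),
      Tendsto (fun n => ∑ i, w n i * f (x n i)) atTop
        (𝓝 (∫ t in a..b, f (Set.projIcc a b hab.le t)))) ↔
      (∃ C : ℝ, ∀ n : ℕ, ∑ i, |w n i| ≤ C) := by
  -- key facts
  have hIbound : ∀ (n : ℕ) (h : C(Set.Icc a b, ℝ)),
      |∑ i, w n i * h (x n i)| ≤ (∑ i, |w n i|) * ‖h‖ := by
    intro n h
    calc |∑ i, w n i * h (x n i)| ≤ ∑ i, |w n i * h (x n i)| := Finset.abs_sum_le_sum_abs _ _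
      _ ≤ ∑ i, |w n i| * ‖h‖ := by
          apply Finset.sum_le_sum
          intro i _
          rw [abs_mul]
          exact mul_le_mul_of_nonneg_left (h.norm_coe_le_norm (x n i)) (abs_nonneg _)
      _ = (∑ i, |w n i|) * ‖h‖ := by rw [Finset.sum_mul]
  constructor
  · -- convergence → stability, via Banach–Steinhaus
    intro hconv
    set T : ℕ → C(Set.Icc a b, ℝ) →L[ℝ] ℝ := fun n =>
      ∑ i, (w n i) • (ContinuousMap.evalCLM ℝ (x n i)) with hT
    have hTapp : ∀ n f, T n f = ∑ i, w n i * f (x n i) := by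
      intro n f
      simp [hT, ContinuousMap.evalCLM]
    obtain ⟨C', hC'⟩ : ∃ C', ∀ n, ‖T n‖ ≤ C' := by
      apply banach_steinhaus
      intro f
      have := (hconv f).norm.bddAbove_range
      obtain ⟨M, hM⟩ := this
      exact ⟨M, fun n => by
        have := hM (Set.mem_range_self n)
        simpa [hTapp] using this⟩
    refine ⟨C', fun n => ?_⟩
    obtain ⟨f, hf1, hf2⟩ := aux_peak (x n) (hx n).injective (w n)
    have h1 : ∑ i, |w n i| = T n f := by
      rw [hTapp]
      refine Finset.sum_congr rfl (fun i _ => ?_)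
      rw [hf2 i, aux_sign_mul]
    calc ∑ i, |w n i| = T n f := h1
      _ ≤ |T n f| := le_abs_self _
      _ ≤ ‖T n‖ * ‖f‖ := (T n).le_opNorm f
      _ ≤ C' * 1 := by
          exact mul_le_mul (hC' n) hf1 (norm_nonneg _) ((norm_nonneg (T n)).trans (hC' n))
      _ = C' := mul_one C'
  · -- stability → convergence
    intro ⟨C, hC⟩ f
    have hC0 : 0 ≤ C := le_trans (Finset.sum_nonneg (fun i _ => abs_nonneg _)) (hC 0)
    have hint : ∀ h : C(Set.Icc a b, ℝ),
        IntervalIntegrable (fun t => h (Set.projIcc a b hab.le t)) MeasureTheory.volume a b :=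
      fun h => (h.continuous.comp continuous_projIcc).intervalIntegrable a b
    rw [Metric.tendsto_atTop]
    intro ε hε
    set ε' := ε / (2 * (C + (b - a) + 1)) with hε'
    have hden : 0 < C + (b - a) + 1 := by linarith
    have hε'0 : 0 < ε' := by positivity
    obtain ⟨g, hgV, hgd⟩ : ∃ g ∈ (V₀ : Set C(Set.Icc a b, ℝ)), dist f g < ε' := by
      have := Metric.mem_closure_iff.mp (hdense f) ε' hε'0
      obtain ⟨g, hg1, hg2⟩ := this
      exact ⟨g, hg1, hg2⟩
    have hfg : ‖f - g‖ < ε' := by rwa [← dist_eq_norm]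
    have := hcons g hgV
    rw [Metric.tendsto_atTop] at this
    obtain ⟨N, hN⟩ := this (ε / 2) (by linarith)
    refine ⟨N, fun n hn => ?_⟩
    have h2 := hN n hn
    rw [Real.dist_eq] at h2 ⊢
    have hterm1 : |∑ i, w n i * f (x n i) - ∑ i, w n i * g (x n i)| ≤ C * ε' := by
      have : ∑ i, w n i * f (x n i) - ∑ i, w n i * g (x n i)
          = ∑ i, w n i * (f - g) (x n i) := by
        rw [← Finset.sum_sub_distrib]
        refine Finset.sum_congr rfl (fun i _ => ?_)
        simp [mul_sub]
      rw [this]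
      calc |∑ i, w n i * (f - g) (x n i)| ≤ (∑ i, |w n i|) * ‖f - g‖ := hIbound n (f - g)
        _ ≤ C * ε' := mul_le_mul (hC n) hfg.le (norm_nonneg _) hC0
    have hterm3 : |(∫ t in a..b, g (Set.projIcc a b hab.le t))
        - (∫ t in a..b, f (Set.projIcc a b hab.le t))| ≤ (b - a) * ε' := by
      rw [← intervalIntegral.integral_sub (hint g) (hint f)]
      have : ∀ t ∈ Set.uIoc a b,
          ‖g (Set.projIcc a b hab.le t) - f (Set.projIcc a b hab.le t)‖ ≤ ε' := by
        intro t _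
        calc ‖g (Set.projIcc a b hab.le t) - f (Set.projIcc a b hab.le t)‖
            = ‖(g - f) (Set.projIcc a b hab.le t)‖ := by simp
          _ ≤ ‖g - f‖ := (g - f).norm_coe_le_norm _
          _ ≤ ε' := by rw [norm_sub_rev]; exact hfg.le
      have := intervalIntegral.norm_integral_le_of_norm_le_const this
      rw [abs_of_pos (by linarith : (0:ℝ) < b - a)] at this
      calc |∫ t in a..b, (g (Set.projIcc a b hab.le t) - f (Set.projIcc a b hab.le t))|
          ≤ ε' * (b - a) := this
        _ = (b - a) * ε' := mul_comm _ _
    have key : (C + (b - a)) * ε' ≤ ε / 2 := by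
      rw [hε', ← mul_div_assoc, div_le_div_iff₀ (by linarith) two_pos]
      nlinarith
    calc |∑ i, w n i * f (x n i) - ∫ t in a..b, f (Set.projIcc a b hab.le t)|
        ≤ |∑ i, w n i * f (x n i) - ∑ i, w n i * g (x n i)|
          + |∑ i, w n i * g (x n i) - ∫ t in a..b, g (Set.projIcc a b hab.le t)|
          + |(∫ t in a..b, g (Set.projIcc a b hab.le t))
              - ∫ t in a..b, f (Set.projIcc a b hab.le t)| := by
          apply abs_sub_le _ _ _ |>.trans
          gcongr
          exact abs_sub_le _ _ _
    _ < C * ε' + ε / 2 + (b - a) * ε' := by linarith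
    _ ≤ ε := by nlinarith [key, hε'0]
end

section
/- Let a < b and for each n ∈ ℕ let a ≤ x₀⁽ⁿ⁾ < x₁⁽ⁿ⁾ < ⋯ < xₙ⁽ⁿ⁾ ≤ b be nodes with nonnegative weights w₀⁽ⁿ⁾, …, wₙ⁽ⁿ⁾ ≥ 0, defining the quadrature rule Iₙ(f) = Σᵢ₌₀ⁿ wᵢ⁽ⁿ⁾ f(xᵢ⁽ⁿ⁾). If Iₙ(p) → ∫ₐᵇ p(x) dx for every polynomial p, then Iₙ(f) → ∫ₐᵇ f(x) dx for every continuous function f on [a,b]. (In particular, Gaussian quadrature rules converge for every continuous integrand.) -/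
open Filter Topology

/-!
With nonnegative weights, `Iₙ` is a functional on `C[a,b]` of norm `Iₙ(1)`, and `Iₙ(1) → b - a`;
so the `Iₙ` form an equicontinuous family. For such a family, the set of `f` on which `Iₙ f`
converges to a continuous limit functional is closed, and here it contains the polynomials,
which are dense by Weierstrass.
-/

theorem ContinuousLinearMap.tendsto_of_tendsto_on_dense {𝕜 E F ι : Type*}
    [NontriviallyNormedField 𝕜] [SeminormedAddCommGroup E] [SeminormedAddCommGroup F]
    [NormedSpace 𝕜 E] [NormedSpace 𝕜 F] {l : Filter ι} {T : ι → E →L[𝕜] F} {G : E → F}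
    (hT : ∃ C, ∀ i x, ‖T i x‖ ≤ C * ‖x‖) (hG : Continuous G) {s : Set E} (hs : Dense s)
    (h : ∀ y ∈ s, Tendsto (fun i ↦ T i y) l (𝓝 (G y))) (x : E) :
    Tendsto (fun i ↦ T i x) l (𝓝 (G x)) :=
  have hTeq : Equicontinuous ((↑) ∘ T) := ((NormedSpace.equicontinuous_TFAE T).out 3 1).mp hT
  (hTeq.isClosed_setOfPred_tendsto hG).closure_subset_iff.mpr h (hs x)

section Quadrature

variable {X ι : Type*} [TopologicalSpace X] [Fintype ι]

noncomputable def quadratureRule (x : ι → X) (w : ι → ℝ) : C(X, ℝ) →L[ℝ] ℝ :=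
  ∑ i, w i • ContinuousMap.evalCLM ℝ (x i)

theorem quadratureRule_apply (x : ι → X) (w : ι → ℝ) (f : C(X, ℝ)) :
    quadratureRule x w f = ∑ i, w i * f (x i) := by
  simp [quadratureRule]

theorem norm_quadratureRule_apply_le [CompactSpace X] (x : ι → X) {w : ι → ℝ}
    (hw : ∀ i, 0 ≤ w i) (f : C(X, ℝ)) :
    ‖quadratureRule x w f‖ ≤ (∑ i, w i) * ‖f‖ := by
  rw [quadratureRule_apply, Finset.sum_mul]
  refine (norm_sum_le _ _).trans (Finset.sum_le_sum fun i _ ↦ ?_)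
  rw [norm_mul, Real.norm_of_nonneg (hw i)]
  exact mul_le_mul_of_nonneg_left (f.norm_coe_le_norm (x i)) (hw i)

end Quadrature

section Icc

variable {E : Type*} [NormedAddCommGroup E] [NormedSpace ℝ E] {a b : ℝ}

theorem intervalIntegral_comp_projIcc (h : a ≤ b) (g : ℝ → E) :
    ∫ t in a..b, g (Set.projIcc a b h t) = ∫ t in a..b, g t :=
  intervalIntegral.integral_congr fun t ht ↦ by
    rw [Set.uIcc_of_le h] at ht
    simp [Set.projIcc_of_mem h ht]

theorem continuous_intervalIntegral_comp_projIcc (h : a ≤ b) :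
    Continuous fun f : C(Set.Icc a b, E) ↦ ∫ t in a..b, f (Set.projIcc a b h t) :=
  intervalIntegral.continuous_parametric_intervalIntegral_of_continuous'
    (by fun_prop) a b

end Icc

theorem nonneg_quadrature_convergent_of_convergent_on_polynomials_general
    {a b : ℝ} (hab : a < b)
    (x : (n : ℕ) → Fin (n + 1) → Set.Icc a b)
    (w : (n : ℕ) → Fin (n + 1) → ℝ) (hw : ∀ n i, 0 ≤ w n i)
    (hpoly : ∀ p : Polynomial ℝ,
      Tendsto (fun n => ∑ i, w n i * p.eval (x n i : ℝ)) atTop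
        (𝓝 (∫ t in a..b, p.eval t))) :
    ∀ f : C(Set.Icc a b, ℝ),
      Tendsto (fun n => ∑ i, w n i * f (x n i)) atTop
        (𝓝 (∫ t in a..b, f (Set.projIcc a b hab.le t))) := by
  intro f
  obtain ⟨C, hC⟩ : BddAbove (Set.range fun n ↦ ∑ i, w n i) :=
    (by simpa using hpoly 1 : Tendsto (fun n ↦ ∑ i, w n i) atTop _).bddAbove_range
  have hbound : ∀ n g, ‖quadratureRule (x n) (w n) g‖ ≤ C * ‖g‖ := fun n g ↦
    (norm_quadratureRule_apply_le (x n) (hw n) g).trans <|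
      mul_le_mul_of_nonneg_right (hC ⟨n, rfl⟩) (norm_nonneg g)
  have hdense : Dense (polynomialFunctions (Set.Icc a b) : Set C(Set.Icc a b, ℝ)) := by
    rw [dense_iff_closure_eq, ← Subalgebra.topologicalClosure_coe,
      polynomialFunctions_closure_eq_top]
    rfl
  have hpoly' : ∀ g ∈ (polynomialFunctions (Set.Icc a b) : Set C(Set.Icc a b, ℝ)),
      Tendsto (fun n ↦ quadratureRule (x n) (w n) g) atTop
        (𝓝 (∫ t in a..b, g (Set.projIcc a b hab.le t))) := by
    rintro _ ⟨p, -, rfl⟩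
    simpa [quadratureRule_apply, intervalIntegral_comp_projIcc hab.le (p.eval ·)] using hpoly p
  simpa [quadratureRule_apply] using ContinuousLinearMap.tendsto_of_tendsto_on_dense ⟨C, hbound⟩
    (continuous_intervalIntegral_comp_projIcc hab.le) hdense hpoly' f

/-- A quadrature rule with nonnegative weights that converges for every polynomial
converges for every continuous function on [a,b].
(In particular, Gaussian quadrature rules converge for every continuous integrand.) -/
theorem nonneg_quadrature_convergent_of_convergent_on_polynomials
    {a b : ℝ} (hab : a < b)
    (x : (n : ℕ) → Fin (n + 1) → Set.Icc a b) (hx : ∀ n, StrictMono (x n))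
    (w : (n : ℕ) → Fin (n + 1) → ℝ) (hw : ∀ n i, 0 ≤ w n i)
    (hpoly : ∀ p : Polynomial ℝ,
      Tendsto (fun n => ∑ i, w n i * p.eval (x n i : ℝ)) atTop
        (𝓝 (∫ t in a..b, p.eval t))) :
    ∀ f : C(Set.Icc a b, ℝ),
      Tendsto (fun n => ∑ i, w n i * f (x n i)) atTop
        (𝓝 (∫ t in a..b, f (Set.projIcc a b hab.le t))) :=
  nonneg_quadrature_convergent_of_convergent_on_polynomials_general hab x w hw hpoly
end
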